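/- Let X and Y be real vector spaces and let f : X → Y be an even function satisfying the functional equation f(2x+y) + f(2x-y) = 4(f(x+y) + f(x-y)) - (3/7)(f(2y) - 2f(y)) + 2f(2x) - 8f(x) for all x, y in X. Then f(0) = 0 and f(2y) = 16 f(y) for all y in X. -/

import Mathlib

/-- The mixed quartic-additive functional equation (1.4):
`f(2x+y) + f(2x-y) = 4(f(x+y) + f(x-y)) - (3/7)(f(2y) - 2f(y)) + 2f(2x) - 8f(x)`. -/
def MixedEq {X Y : Type*} [AddCommGroup X] [Module ℝ X] [AddCommGroup Y] [Module ℝ Y]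
    (f : X → Y) : Prop :=
  ∀ x y : X,
    f ((2 : ℝ) • x + y) + f ((2 : ℝ) • x - y) =
      (4 : ℝ) • (f (x + y) + f (x - y))
        - ((3 : ℝ) / 7) • (f ((2 : ℝ) • y) - (2 : ℝ) • f y)
        + (2 : ℝ) • f ((2 : ℝ) • x) - (8 : ℝ) • f x

/-- The quartic functional equation (1.3):
`f(2x+y) + f(2x-y) = 4(f(x+y) + f(x-y)) + 24 f(x) - 6 f(y)`. -/
def IsQuartic {X Y : Type*} [AddCommGroup X] [Module ℝ X] [AddCommGroup Y] [Module ℝ Y]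
    (f : X → Y) : Prop :=
  ∀ x y : X,
    f ((2 : ℝ) • x + y) + f ((2 : ℝ) • x - y) =
      (4 : ℝ) • (f (x + y) + f (x - y)) + (24 : ℝ) • f x - (6 : ℝ) • f y

namespace MixedEq

variable {X Y : Type*} [AddCommGroup X] [Module ℝ X] [AddCommGroup Y] [Module ℝ Y] {f : X → Y}

theorem map_zero (hf : MixedEq f) : f 0 = 0 := by
  have h := hf 0 0
  simp only [smul_zero, add_zero, sub_zero] at h
  linear_combination (norm := module) (-7 / 3 : ℝ) • h

theorem map_two_smul (hf : MixedEq f) (heven : ∀ x : X, f (-x) = f x) (y : X) :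
    f ((2 : ℝ) • y) = (16 : ℝ) • f y := by
  have h := hf 0 y
  simp only [smul_zero, zero_add, zero_sub, heven, hf.map_zero] at h
  linear_combination (norm := module) (7 / 3 : ℝ) • h

end MixedEq

theorem even_solution_doubling {X Y : Type*} [AddCommGroup X] [Module ℝ X]
    [AddCommGroup Y] [Module ℝ Y] (f : X → Y)
    (heven : ∀ x : X, f (-x) = f x) (hf : MixedEq f) :
    f 0 = 0 ∧ ∀ y : X, f ((2 : ℝ) • y) = (16 : ℝ) • f y :=
  ⟨hf.map_zero, hf.map_two_smul heven⟩
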